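/- Let ε₀ > 0 and let P be a smooth real-valued function on Δ_{ε₀} satisfying the condition (I). Let B ∈ ℂ∖{0} and let m be a positive integer. Then there exists α ∈ ℝ such that limsup_{z → 0, z ∈ Δ̃_{ε₀}} |Re( B (iα − 1)ᵐ P_z(z)/P(z) )| = +∞, where Δ̃_{ε₀} := {z ∈ Δ_{ε₀} : P(z) ≠ 0}. -/

import Mathlib

open Filter Set Metric Complex

/-- The Wirtinger derivative `∂u/∂z = (u_x - i u_y)/2` of a real-valued function on `ℂ`. -/
noncomputable def wDeriv (u : ℂ → ℝ) (z : ℂ) : ℂ :=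
  (((fderiv ℝ u z) 1 : ℝ) - Complex.I * ((fderiv ℝ u z) Complex.I : ℝ)) / 2

/-- A smooth real function `f` on a neighborhood `U` of `0 ∈ ℂ` satisfies condition (I). -/
def ConditionI (f : ℂ → ℝ) (U : Set ℂ) : Prop :=
  (∀ k : ℕ, 1 ≤ k → ∀ b : ℂ, b ≠ 0 → ∀ B : ℝ,
    ∃ᶠ z in nhdsWithin (0:ℂ) {z ∈ U | f z ≠ 0},
      B < |(b * z ^ k * wDeriv f z / (f z : ℂ)).re|) ∧
  (∀ B : ℝ,
    ∃ᶠ z in nhdsWithin (0:ℂ) {z ∈ U | f z ≠ 0},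
      B < ‖wDeriv f z / (f z : ℂ)‖)

/-!
If `c₁, c₂ ∈ ℂ` satisfy `Im (c̄₁ c₂) ≠ 0`, i.e. are `ℝ`-linearly independent, then `w` is
recovered linearly from `Re (c₁ w)` and `Re (c₂ w)`, so `‖w‖` is bounded by a multiple of `|Re (c₁ w)| + |Re (c₂ w)|`. Since `P_z / P` is unbounded near `0`, at least one of
`Re (c₁ P_z / P)`, `Re (c₂ P_z / P)` is unbounded. Take `cᵢ = B (iαᵢ - 1)ᵐ` with `α₁ = 0` and
`α₂ = tan (π / 4m)`: then `c̄₁ c₂ = |B|² (1 - iα₂)ᵐ`, whose argument is `-π/4`.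
-/

theorem im_conj_mul_mul_eq (c₁ c₂ w : ℂ) :
    ((starRingEnd ℂ c₁ * c₂).im : ℂ) * w
      = I * ((c₁ * w).re * starRingEnd ℂ c₂ - (c₂ * w).re * starRingEnd ℂ c₁) := by
  apply Complex.ext <;>
    simp only [mul_re, mul_im, ofReal_re, ofReal_im, I_re, I_im, sub_re, sub_im, conj_re, conj_im] <;>
    ring

theorem norm_le_of_im_conj_mul_ne_zero {c₁ c₂ : ℂ} (hc : (starRingEnd ℂ c₁ * c₂).im ≠ 0)
    (w : ℂ) :
    ‖w‖ ≤ (‖c₂‖ * |(c₁ * w).re| + ‖c₁‖ * |(c₂ * w).re|) / |(starRingEnd ℂ c₁ * c₂).im| := by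
  have hnorm : |(starRingEnd ℂ c₁ * c₂).im| * ‖w‖ = ‖((starRingEnd ℂ c₁ * c₂).im : ℂ) * w‖ := by
    rw [norm_mul, Complex.norm_real, Real.norm_eq_abs]
  rw [le_div_iff₀ (abs_pos.mpr hc), mul_comm, hnorm, im_conj_mul_mul_eq, norm_mul, norm_I,
    one_mul]
  refine (norm_sub_le _ _).trans_eq ?_
  simp only [norm_mul, Complex.norm_real, Real.norm_eq_abs, Complex.norm_conj]
  ring

theorem frequently_abs_re_mul_or_of_frequently_norm {ι : Type*} {l : Filter ι} {g : ι → ℂ}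
    {c₁ c₂ : ℂ} (hc : (starRingEnd ℂ c₁ * c₂).im ≠ 0) (hg : ∀ M : ℝ, ∃ᶠ x in l, M < ‖g x‖) :
    (∀ M : ℝ, ∃ᶠ x in l, M < |(c₁ * g x).re|) ∨ ∀ M : ℝ, ∃ᶠ x in l, M < |(c₂ * g x).re| := by
  by_contra! h
  obtain ⟨⟨M₁, hM₁⟩, ⟨M₂, hM₂⟩⟩ := h
  obtain ⟨x, hx, hx₁, hx₂⟩ :=
    ((hg ((‖c₂‖ * M₁ + ‖c₁‖ * M₂) / |(starRingEnd ℂ c₁ * c₂).im|)).and_eventually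
      (hM₁.and hM₂)).exists
  refine hx.not_ge ((norm_le_of_im_conj_mul_ne_zero hc (g x)).trans ?_)
  gcongr

theorem exists_im_one_sub_mul_I_pow_ne_zero {m : ℕ} (hm : m ≠ 0) :
    ∃ α : ℝ, ((1 - α * I) ^ m).im ≠ 0 := by
  set θ := Real.pi / (4 * m)
  have hθ : m * θ = Real.pi / 4 := by
    simp only [θ]; field_simp
  have hcos : 0 < Real.cos θ := by
    have : (1 : ℝ) ≤ m := by exact_mod_cast Nat.one_le_iff_ne_zero.mpr hm
    refine Real.cos_pos_of_mem_Ioo ⟨by linarith [Real.pi_pos, show 0 < θ by positivity], ?_⟩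
    rw [div_lt_div_iff₀ (by positivity) two_pos]
    nlinarith [Real.pi_pos]
  refine ⟨Real.tan θ, fun h => ?_⟩
  have hbase : (Real.cos θ : ℂ) * (1 - Real.tan θ * I) = exp ((-θ : ℝ) * I) := by
    have hc : cos (θ : ℂ) ≠ 0 := by rw [← Complex.ofReal_cos]; exact_mod_cast hcos.ne'
    rw [Complex.exp_mul_I, Real.tan_eq_sin_div_cos]
    push_cast
    rw [Complex.cos_neg, Complex.sin_neg]
    field_simp
    ring
  have hpow : ((Real.cos θ ^ m : ℝ) : ℂ) * (1 - Real.tan θ * I) ^ m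
      = exp ((-(Real.pi / 4) : ℝ) * I) := by
    rw [Complex.ofReal_pow, ← mul_pow, hbase, ← Complex.exp_nat_mul, ← hθ]
    push_cast
    ring_nf
  have := congrArg Complex.im hpow
  rw [Complex.im_ofReal_mul, h, mul_zero, Complex.exp_ofReal_mul_I_im, Real.sin_neg,
    Real.sin_pi_div_four] at this
  have : (0:ℝ) < √2 / 2 := by positivity
  linarith

theorem stmt_10_general (ε₀ : ℝ) (P : ℂ → ℝ)
    (hPI : ConditionI P (ball (0:ℂ) ε₀))
    (B : ℂ) (hB : B ≠ 0) (m : ℕ) (hm : 1 ≤ m) :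
    ∃ α : ℝ, ∀ M : ℝ,
      ∃ᶠ z in nhdsWithin (0:ℂ) {z ∈ ball (0:ℂ) ε₀ | P z ≠ 0},
        M < |(B * ((α:ℂ) * Complex.I - 1) ^ m * wDeriv P z / (P z : ℂ)).re| := by
  obtain ⟨α, hα⟩ := exists_im_one_sub_mul_I_pow_ne_zero (Nat.one_le_iff_ne_zero.mp hm)
  have hconj : starRingEnd ℂ (B * (((0:ℝ):ℂ) * I - 1) ^ m) * (B * ((α:ℂ) * I - 1) ^ m)
      = (normSq B : ℂ) * (1 - α * I) ^ m := by
    rw [← Complex.mul_conj, map_mul, map_pow, ofReal_zero, zero_mul, zero_sub, map_neg, map_one,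
      mul_mul_mul_comm, mul_comm (starRingEnd ℂ B), ← mul_pow]
    ring
  have hc :
      (starRingEnd ℂ (B * (((0:ℝ):ℂ) * I - 1) ^ m) * (B * ((α:ℂ) * I - 1) ^ m)).im ≠ 0 := by
    rw [hconj, im_ofReal_mul]
    exact mul_ne_zero (normSq_pos.mpr hB).ne' hα
  simp only [mul_div_assoc]
  rcases frequently_abs_re_mul_or_of_frequently_norm hc hPI.2 with h | h
  exacts [⟨0, h⟩, ⟨α, h⟩]

/-- Lemma 5.2 of the paper: if `P` satisfies condition (I), `B ≠ 0`, and `m ≥ 1`, then there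
exists `α ∈ ℝ` with `limsup_{z → 0, P(z) ≠ 0} |Re(B (iα − 1)ᵐ P_z(z)/P(z))| = +∞`. -/
theorem stmt_10 (ε₀ : ℝ) (hε₀ : 0 < ε₀) (P : ℂ → ℝ)
    (hPsm : ContDiffOn ℝ (⊤ : ℕ∞) P (ball (0:ℂ) ε₀))
    (hPI : ConditionI P (ball (0:ℂ) ε₀))
    (B : ℂ) (hB : B ≠ 0) (m : ℕ) (hm : 1 ≤ m) :
    ∃ α : ℝ, ∀ M : ℝ,
      ∃ᶠ z in nhdsWithin (0:ℂ) {z ∈ ball (0:ℂ) ε₀ | P z ≠ 0},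
        M < |(B * ((α:ℂ) * Complex.I - 1) ^ m * wDeriv P z / (P z : ℂ)).re| :=
  stmt_10_general ε₀ P hPI B hB m hm
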